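/- arXiv:2501.10538 — 5 statements merged into one kernel-verified Lean document; each statement's English description precedes it below -/
import Mathlib

section
/- Let $\boldsymbol{w}, \boldsymbol{\mu} \in \mathbb{R}^p$ with $\langle \boldsymbol{w}, \boldsymbol{\mu}\rangle > 0$. In the noisy mixture model with noise rate $\eta \in [0,1/2)$, the misclassification probability satisfies $\mathbb{P}(\langle \boldsymbol{w}, y_{\mathrm{N}}\boldsymbol{x}\rangle < 0) \le \eta + \frac{1-\eta}{2}\|\mathbb{E}[\boldsymbol{z}\boldsymbol{z}^\top]\| \left(\frac{\|\boldsymbol{w}\|}{\langle \boldsymbol{w}, \boldsymbol{\mu}\rangle}\right)^2$, where $\|\cdot\|$ denotes the spectral norm. -/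
/-!
On the event `ε = 1` the noisy margin `⟪w, y_N x⟫` is the clean margin `y (y a + ⟪w, z⟫)` with
`a = ⟪w, μ⟫`, so by independence of the flip the error is at most
`P(ε ≠ 1) + P(ε = 1) · P(clean error) = η + (1 - η) · P(clean error)`. As `y` is a fair sign
independent of `z`, the clean error is `a + y ⟪w, z⟫ < 0`, of probability `P(a < |⟪w, z⟫|) / 2`.
Finally Markov's inequality for `⟪w, z⟫²`, whose mean is the quadratic form `wᵀ S w ≤ ‖S‖ ‖w‖²`,
bounds `P(a < |⟪w, z⟫|)` by `‖S‖ ‖w‖² / a²`.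
-/

open MeasureTheory ProbabilityTheory Matrix WithLp
open scoped Matrix.Norms.L2Operator RealInnerProductSpace

section
variable {n : Type*} [Fintype n]

lemma EuclideanSpace.real_inner_sq_eq_sum (w v : EuclideanSpace ℝ n) :
    ⟪w, v⟫ ^ 2 = ∑ i, ∑ j, w i * w j * (v i * v j) := by
  simp only [PiLp.inner_apply, RCLike.inner_apply, conj_trivial, sq, Finset.sum_mul_sum]
  exact Finset.sum_congr rfl fun i _ => Finset.sum_congr rfl fun j _ => by ring

lemma Matrix.dotProduct_mulVec_le_l2_opNorm_mul_sq [DecidableEq n] (S : Matrix n n ℝ)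
    (w : EuclideanSpace ℝ n) : ofLp w ⬝ᵥ S *ᵥ ofLp w ≤ ‖S‖ * ‖w‖ ^ 2 :=
  calc ofLp w ⬝ᵥ S *ᵥ ofLp w = ⟪w, (EuclideanSpace.equiv n ℝ).symm (S *ᵥ ofLp w)⟫ := by
        simp [PiLp.inner_apply, dotProduct, mul_comm]
    _ ≤ ‖w‖ * ‖(EuclideanSpace.equiv n ℝ).symm (S *ᵥ ofLp w)‖ := real_inner_le_norm _ _
    _ ≤ ‖w‖ * (‖S‖ * ‖w‖) := by gcongr; exact S.l2_opNorm_mulVec w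
    _ = ‖S‖ * ‖w‖ ^ 2 := by ring

variable {Ω : Type*} [MeasurableSpace Ω] {P : Measure Ω} {z : Ω → EuclideanSpace ℝ n}

lemma integrable_inner_sq (hz : ∀ i j, Integrable (fun ω => z ω i * z ω j) P)
    (w : EuclideanSpace ℝ n) : Integrable (fun ω => ⟪w, z ω⟫ ^ 2) P := by
  simp only [EuclideanSpace.real_inner_sq_eq_sum]
  exact integrable_finsetSum _ fun i _ => integrable_finsetSum _ fun j _ => (hz i j).const_mul _

lemma integral_inner_sq_eq_dotProduct_mulVec
    (hz : ∀ i j, Integrable (fun ω => z ω i * z ω j) P) {S : Matrix n n ℝ}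
    (hS : ∀ i j, S i j = ∫ ω, z ω i * z ω j ∂P) (w : EuclideanSpace ℝ n) :
    ∫ ω, ⟪w, z ω⟫ ^ 2 ∂P = ofLp w ⬝ᵥ S *ᵥ ofLp w := by
  simp only [EuclideanSpace.real_inner_sq_eq_sum]
  rw [integral_finsetSum _ fun i _ => integrable_finsetSum _ fun j _ => (hz i j).const_mul _]
  simp only [dotProduct, mulVec, Finset.mul_sum]
  refine Finset.sum_congr rfl fun i _ => ?_
  rw [integral_finsetSum _ fun j _ => (hz i j).const_mul _]
  refine Finset.sum_congr rfl fun j _ => ?_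
  rw [integral_const_mul, hS]
  ring

lemma measureReal_lt_abs_inner_le [DecidableEq n] [IsFiniteMeasure P]
    (hz : ∀ i j, Integrable (fun ω => z ω i * z ω j) P) {S : Matrix n n ℝ}
    (hS : ∀ i j, S i j = ∫ ω, z ω i * z ω j ∂P) (w : EuclideanSpace ℝ n) {a : ℝ} (ha : 0 < a) :
    P.real {ω | a < |⟪w, z ω⟫|} ≤ ‖S‖ * ‖w‖ ^ 2 / a ^ 2 := by
  have hsub : {ω | a < |⟪w, z ω⟫|} ⊆ {ω | a ^ 2 ≤ ⟪w, z ω⟫ ^ 2} := fun ω (hω : a < _) => by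
    simpa using (pow_lt_pow_left₀ hω ha.le two_ne_zero).le
  rw [le_div_iff₀ (by positivity), mul_comm]
  calc a ^ 2 * P.real {ω | a < |⟪w, z ω⟫|} ≤ a ^ 2 * P.real {ω | a ^ 2 ≤ ⟪w, z ω⟫ ^ 2} :=
        mul_le_mul_of_nonneg_left (measureReal_mono hsub) (sq_nonneg a)
    _ ≤ ∫ ω, ⟪w, z ω⟫ ^ 2 ∂P := mul_meas_ge_le_integral_of_nonneg
        (ae_of_all _ fun ω => sq_nonneg _) (integrable_inner_sq hz w) (a ^ 2)
    _ = ofLp w ⬝ᵥ S *ᵥ ofLp w := integral_inner_sq_eq_dotProduct_mulVec hz hS w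
    _ ≤ ‖S‖ * ‖w‖ ^ 2 := S.dotProduct_mulVec_le_l2_opNorm_mul_sq w

end

section
variable {Ω : Type*} [MeasurableSpace Ω] {P : Measure Ω}

lemma ProbabilityTheory.IndepFun.measureReal_inter_preimage_eq_mul {β γ : Type*}
    [MeasurableSpace β] [MeasurableSpace γ] {f : Ω → β} {g : Ω → γ} (h : IndepFun f g P)
    {s : Set β} {t : Set γ} (hs : MeasurableSet s) (ht : MeasurableSet t) :
    P.real (f ⁻¹' s ∩ g ⁻¹' t) = P.real (f ⁻¹' s) * P.real (g ⁻¹' t) := by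
  simp only [measureReal_def, h.measure_inter_preimage_eq_mul _ _ hs ht, ENNReal.toReal_mul]

variable [IsProbabilityMeasure P]

lemma ProbabilityTheory.IndepFun.measureReal_le_one_sub_add_mul {α β : Type*}
    [MeasurableSpace α] [MeasurableSpace β] {f : Ω → α} {g : Ω → β} (hf : Measurable f)
    (h : IndepFun f g P) {s : Set α} {t : Set β} (hs : MeasurableSet s) (ht : MeasurableSet t)
    {A : Set Ω} (hA : A ⊆ (f ⁻¹' s)ᶜ ∪ f ⁻¹' s ∩ g ⁻¹' t) :
    P.real A ≤ 1 - P.real (f ⁻¹' s) + P.real (f ⁻¹' s) * P.real (g ⁻¹' t) := by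
  rw [← probReal_compl_eq_one_sub (hf hs), ← h.measureReal_inter_preimage_eq_mul hs ht]
  exact (measureReal_mono hA).trans (measureReal_union_le _ _)

variable {y : Ω → ℝ}

lemma ae_eq_one_or_eq_neg_one_of_measure_eq_half (hy : Measurable y)
    (hy1 : P {ω | y ω = 1} = 1 / 2) (hym1 : P {ω | y ω = -1} = 1 / 2) :
    ∀ᵐ ω ∂P, y ω = 1 ∨ y ω = -1 := by
  have hdisj : Disjoint {ω | y ω = 1} {ω | y ω = -1} :=
    Set.disjoint_left.2 fun ω (h1 : y ω = 1) (h2 : y ω = -1) => by linarith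
  have hm1 : MeasurableSet {ω | y ω = 1} := hy (measurableSet_singleton _)
  have hm : MeasurableSet {ω | y ω = -1} := hy (measurableSet_singleton _)
  change P ({ω | y ω = 1} ∪ {ω | y ω = -1})ᶜ = 0
  rw [prob_compl_eq_zero_iff (hm1.union hm),
    measure_union hdisj hm, hy1, hym1, ENNReal.add_halves]

lemma measureReal_mul_mul_add_lt_zero_le {g : Ω → ℝ} (hy : Measurable y) (hg : Measurable g)
    (hy1 : P {ω | y ω = 1} = 1 / 2) (hym1 : P {ω | y ω = -1} = 1 / 2) (hind : IndepFun y g P)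
    {a : ℝ} (ha : 0 ≤ a) :
    P.real {ω | y ω * (y ω * a + g ω) < 0} ≤ P.real {ω | a < |g ω|} / 2 := by
  have hsub : {ω | y ω * (y ω * a + g ω) < 0} ≤ᵐ[P]
      (y ⁻¹' {1} ∩ g ⁻¹' Set.Iio (-a) ∪ y ⁻¹' {-1} ∩ g ⁻¹' Set.Ioi a : Set Ω) := by
    filter_upwards [ae_eq_one_or_eq_neg_one_of_measure_eq_half hy hy1 hym1]
      with ω hω (h : y ω * (y ω * a + g ω) < 0)
    change ω ∈ (_ : Set Ω)
    rcases hω with hω | hω <;> norm_num [hω] at h ⊢ <;> linarith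
  have half : ∀ {c : ℝ} {t : Set ℝ}, P {ω | y ω = c} = 1 / 2 → MeasurableSet t →
      P.real (y ⁻¹' {c} ∩ g ⁻¹' t) = P.real (g ⁻¹' t) / 2 := fun hc ht => by
    rw [hind.measureReal_inter_preimage_eq_mul (measurableSet_singleton _) ht, measureReal_def]
    change (P {ω | y ω = _}).toReal * _ = _
    rw [hc]
    simp [div_eq_inv_mul]
  have hunion : g ⁻¹' Set.Iio (-a) ∪ g ⁻¹' Set.Ioi a = {ω | a < |g ω|} := by
    ext ω; simp [lt_abs, lt_neg, or_comm]
  have hdisj : Disjoint (g ⁻¹' Set.Iio (-a)) (g ⁻¹' Set.Ioi a) :=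
    Set.disjoint_left.2 fun ω (h1 : g ω < -a) (h2 : a < g ω) => by linarith
  calc P.real {ω | y ω * (y ω * a + g ω) < 0}
      ≤ P.real (y ⁻¹' {1} ∩ g ⁻¹' Set.Iio (-a) ∪ y ⁻¹' {-1} ∩ g ⁻¹' Set.Ioi a) :=
        ENNReal.toReal_mono (measure_ne_top _ _) (measure_mono_ae hsub)
    _ ≤ P.real (g ⁻¹' Set.Iio (-a)) / 2 + P.real (g ⁻¹' Set.Ioi a) / 2 :=
        (measureReal_union_le _ _).trans_eq <| by
          rw [half hy1 measurableSet_Iio, half hym1 measurableSet_Ioi]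
    _ = P.real {ω | a < |g ω|} / 2 := by
        rw [← hunion, measureReal_union hdisj (hg measurableSet_Ioi)]; ring

end

theorem stmt1_general {Ω : Type*} [MeasurableSpace Ω] (P : Measure Ω) [IsProbabilityMeasure P]
    {p : ℕ} (w μ : EuclideanSpace ℝ (Fin p)) (y : Ω → ℝ)
    (z : Ω → EuclideanSpace ℝ (Fin p)) (ε : Ω → ℝ)
    (hy : Measurable y) (hz : Measurable z) (hε : Measurable ε)
    (hy1 : P {ω | y ω = 1} = 1/2) (hym1 : P {ω | y ω = -1} = 1/2)
    (hindyz : IndepFun y z P)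
    (η : ℝ) (hη : η < 1/2)
    (hε2 : P {ω | ε ω = 1} = ENNReal.ofReal (1 - η))
    (hindε : IndepFun ε (fun ω => (y ω, z ω)) P)
    (hzint : ∀ i j : Fin p, Integrable (fun ω => z ω i * z ω j) P)
    (S : Matrix (Fin p) (Fin p) ℝ)
    (hS : ∀ i j, S i j = ∫ ω, z ω i * z ω j ∂P)
    (hwμ : 0 < ⟪w, μ⟫) :
    (P {ω | ⟪w, (ε ω * y ω) • (y ω • μ + z ω)⟫ < 0}).toReal
      ≤ η + (1 - η) / 2 * ‖S‖ * (‖w‖ / ⟪w, μ⟫)^2 := by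
  set a := ⟪w, μ⟫
  set T : Set (ℝ × EuclideanSpace ℝ (Fin p)) := {q | q.1 * (q.1 * a + ⟪w, q.2⟫) < 0}
  have hT : MeasurableSet T := measurableSet_lt (by fun_prop) measurable_const
  have hflip : P.real (ε ⁻¹' {1}) = 1 - η := by
    change (P {ω | ε ω = 1}).toReal = _
    rw [hε2, ENNReal.toReal_ofReal (by linarith)]
  have hsub : {ω | ⟪w, (ε ω * y ω) • (y ω • μ + z ω)⟫ < 0} ⊆
      (ε ⁻¹' {1})ᶜ ∪ ε ⁻¹' {1} ∩ (fun ω => (y ω, z ω)) ⁻¹' T := by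
    intro ω (hω : ⟪w, _⟫ < 0)
    rw [real_inner_smul_right, inner_add_right, real_inner_smul_right] at hω
    by_cases h : ε ω = 1
    · refine Or.inr ⟨h, ?_⟩
      change y ω * (y ω * a + _) < 0
      simpa [h] using hω
    · exact Or.inl h
  have hnoiseless : P.real ((fun ω => (y ω, z ω)) ⁻¹' T) ≤ P.real {ω | a < |⟪w, z ω⟫|} / 2 :=
    measureReal_mul_mul_add_lt_zero_le hy (by fun_prop) hy1 hym1
      (hindyz.comp measurable_id (by fun_prop)) hwμ.le
  calc P.real {ω | ⟪w, (ε ω * y ω) • (y ω • μ + z ω)⟫ < 0}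
      ≤ η + (1 - η) * P.real ((fun ω => (y ω, z ω)) ⁻¹' T) := by
        refine (hindε.measureReal_le_one_sub_add_mul hε (measurableSet_singleton 1) hT
          hsub).trans_eq ?_
        rw [hflip]; ring
    _ ≤ η + (1 - η) * (‖S‖ * ‖w‖ ^ 2 / a ^ 2 / 2) := by
        gcongr
        · linarith
        · exact hnoiseless.trans (by gcongr; exact measureReal_lt_abs_inner_le hzint hS w hwμ)
    _ = η + (1 - η) / 2 * ‖S‖ * (‖w‖ / a) ^ 2 := by ring

/-- Noisy mixture model test error bound:
`P(⟨w, y_N • x⟩ < 0) ≤ η + (1-η)/2 ‖E[zzᵀ]‖ (‖w‖/⟨w,μ⟩)²`, where `‖·‖` on the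
matrix `E[zzᵀ]` is the spectral (ℓ²-operator) norm.  The noisy label is
`y_N = ε * y` with a flip variable `ε ∈ {-1,1}`, `P(ε = -1) = η`, independent
of `(y,z)`. -/
theorem stmt1 {Ω : Type*} [MeasurableSpace Ω] (P : Measure Ω) [IsProbabilityMeasure P]
    {p : ℕ} (w μ : EuclideanSpace ℝ (Fin p)) (y : Ω → ℝ)
    (z : Ω → EuclideanSpace ℝ (Fin p)) (ε : Ω → ℝ)
    (hy : Measurable y) (hz : Measurable z) (hε : Measurable ε)
    (hy1 : P {ω | y ω = 1} = 1/2) (hym1 : P {ω | y ω = -1} = 1/2)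
    (hindyz : IndepFun y z P)
    (η : ℝ) (hη0 : 0 ≤ η) (hη : η < 1/2)
    (hε1 : P {ω | ε ω = -1} = ENNReal.ofReal η)
    (hε2 : P {ω | ε ω = 1} = ENNReal.ofReal (1 - η))
    (hindε : IndepFun ε (fun ω => (y ω, z ω)) P)
    (hzint : ∀ i j : Fin p, Integrable (fun ω => z ω i * z ω j) P)
    (S : Matrix (Fin p) (Fin p) ℝ)
    (hS : ∀ i j, S i j = ∫ ω, z ω i * z ω j ∂P)
    (hwμ : 0 < ⟪w, μ⟫) :
    (P {ω | ⟪w, (ε ω * y ω) • (y ω • μ + z ω)⟫ < 0}).toReal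
      ≤ η + (1 - η) / 2 * ‖S‖ * (‖w‖ / ⟪w, μ⟫)^2 :=
  stmt1_general P w μ y z ε hy hz hε hy1 hym1 hindyz η hη hε2 hindε hzint S hS hwμ
end

section
/- Let $\check A$ be a symmetric $n\times n$ matrix with $\|\check A - I_n\| \le \varepsilon$ for some $\varepsilon \in [0, 1/2]$. Then for all nonzero $\boldsymbol{a}, \boldsymbol{b} \in \mathbb{R}^n$, $\frac{\langle \boldsymbol{a},\boldsymbol{b}\rangle - \varepsilon\|\boldsymbol{a}\|\|\boldsymbol{b}\|}{1-\varepsilon^2} \le \boldsymbol{a}^\top \check A^{-1}\boldsymbol{b} \le \frac{\langle \boldsymbol{a},\boldsymbol{b}\rangle + \varepsilon\|\boldsymbol{a}\|\|\boldsymbol{b}\|}{1-\varepsilon^2}$. -/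
/-!
Since `‖Ǎ - I‖ ≤ ε`, the spectrum of `Ǎ` lies in `[1 - ε, 1 + ε]`, so that of `Ǎ⁻¹` lies in
`[1/(1 + ε), 1/(1 - ε)]`, the interval with centre `1/(1 - ε²)` and radius `ε/(1 - ε²)`.
For the symmetric matrix `Ǎ⁻¹` this gives `‖Ǎ⁻¹ - (1 - ε²)⁻¹ I‖ ≤ ε/(1 - ε²)`, and the claim is
Cauchy–Schwarz for `aᵀ (Ǎ⁻¹ - (1 - ε²)⁻¹ I) b`.

No eigenvalues are needed: substituting `x = Ǎ y`, the quadratic form of `Ǎ⁻¹` is controlled by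
`‖(Ǎ - I) y‖ ≤ ε ‖y‖`, and the norm of a symmetric operator is the supremum of its Rayleigh
quotient (polarization).
-/

open Matrix
open scoped Matrix.Norms.L2Operator RealInnerProductSpace

namespace ContinuousLinearMap

variable {F : Type*} [NormedAddCommGroup F] [InnerProductSpace ℝ F]

theorem abs_mul_inner_apply_self_sub_norm_sq_le {T : F →L[ℝ] F} {ε : ℝ} (h : ‖T - 1‖ ≤ ε)
    (hε : ε ≤ 1) (y : F) : |(1 - ε ^ 2) * ⟪T y, y⟫ - ‖T y‖ ^ 2| ≤ ε * ‖T y‖ ^ 2 := by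
  set e := (T - 1) y
  have hTy : T y = y + e := by simp [e]
  have he : ‖e‖ ≤ ε * ‖y‖ := (T - 1).le_of_opNorm_le h y
  obtain ⟨hlo, hhi⟩ := abs_le.mp (abs_real_inner_le_norm e y)
  have hq : ⟪T y, y⟫ = ‖y‖ ^ 2 + ⟪e, y⟫ := by
    rw [hTy, inner_add_left, real_inner_self_eq_norm_sq]
  have hp : ‖T y‖ ^ 2 = ‖y‖ ^ 2 + 2 * ⟪e, y⟫ + ‖e‖ ^ 2 := by
    rw [hTy, norm_add_sq_real, real_inner_comm]
  have hε0 : 0 ≤ ε := (norm_nonneg _).trans h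
  -- Each side of the claim is `1 ∓ ε` times one of these products, plus Cauchy–Schwarz slack.
  have hfactor₁ : 0 ≤ (ε * ‖y‖ - ‖e‖) * (‖y‖ + ‖e‖) := by
    apply mul_nonneg <;> nlinarith [norm_nonneg e, norm_nonneg y]
  have hfactor₂ : 0 ≤ (‖y‖ - ‖e‖) * (ε * ‖y‖ - ‖e‖) := by
    apply mul_nonneg <;> nlinarith [norm_nonneg e, norm_nonneg y]
  rw [hq, hp, abs_le]
  constructor
  · nlinarith [mul_nonneg (by linarith : (0 : ℝ) ≤ 1 - ε) hfactor₁,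
      mul_le_mul_of_nonneg_left hhi (sq_nonneg (1 - ε))]
  · nlinarith [mul_nonneg (by linarith : (0 : ℝ) ≤ 1 + ε) hfactor₂,
      mul_le_mul_of_nonneg_left hlo (sq_nonneg (1 + ε))]

theorem norm_sub_smul_one_le_of_abs_inner_sub_le {S : F →L[ℝ] F}
    (hS : (S : F →ₗ[ℝ] F).IsSymmetric) {c r : ℝ} (hr : 0 ≤ r)
    (h : ∀ x, |⟪S x, x⟫ - c * ‖x‖ ^ 2| ≤ r * ‖x‖ ^ 2) : ‖S - c • 1‖ ≤ r := by
  have hsymm : ((S - c • 1 : F →L[ℝ] F) : F →ₗ[ℝ] F).IsSymmetric :=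
    hS.sub (LinearMap.IsSymmetric.id.smul (conj_trivial c))
  rw [norm_eq_iSup_rayleighQuotient _ hsymm]
  refine ciSup_le fun x => ?_
  rcases eq_or_ne x 0 with rfl | hx
  · simpa using hr
  · have hx' : 0 < ‖x‖ ^ 2 := by positivity
    rw [rayleighQuotient, reApplyInnerSelf_apply, abs_div, abs_of_pos hx', div_le_iff₀ hx']
    simpa [inner_sub_left, inner_smul_left, real_inner_self_eq_norm_sq] using h x

theorem norm_sub_smul_one_le_of_mul_eq_one {T S : F →L[ℝ] F}
    (hS : (S : F →ₗ[ℝ] F).IsSymmetric) {ε : ℝ} (h : ‖T - 1‖ ≤ ε) (hε : ε < 1) (hTS : T * S = 1) :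
    ‖S - (1 - ε ^ 2)⁻¹ • 1‖ ≤ ε / (1 - ε ^ 2) := by
  have hε0 : 0 ≤ ε := (norm_nonneg _).trans h
  have hpos : 0 < 1 - ε ^ 2 := by nlinarith
  refine norm_sub_smul_one_le_of_abs_inner_sub_le hS (by positivity) fun x => ?_
  have key := abs_mul_inner_apply_self_sub_norm_sq_le h hε.le (S x)
  rw [show T (S x) = x from DFunLike.congr_fun hTS x, real_inner_comm] at key
  have hdiv : ⟪S x, x⟫ - (1 - ε ^ 2)⁻¹ * ‖x‖ ^ 2
      = ((1 - ε ^ 2) * ⟪S x, x⟫ - ‖x‖ ^ 2) / (1 - ε ^ 2) := by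
    field_simp
  rw [hdiv, abs_div, abs_of_pos hpos, div_le_iff₀ hpos]
  calc _ ≤ ε * ‖x‖ ^ 2 := key
    _ = ε / (1 - ε ^ 2) * ‖x‖ ^ 2 * (1 - ε ^ 2) := by field_simp

end ContinuousLinearMap

theorem EuclideanSpace.norm_toLp_eq_sqrt_dotProduct {n : Type*} [Fintype n] (v : n → ℝ) :
    ‖(WithLp.toLp 2 v : EuclideanSpace ℝ n)‖ = √(v ⬝ᵥ v) := by
  rw [norm_eq_sqrt_real_inner (F := EuclideanSpace ℝ n), EuclideanSpace.inner_toLp_toLp,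
    star_trivial]

namespace Matrix

theorem abs_dotProduct_mulVec_le {m n : Type*} [Fintype m] [Fintype n] [DecidableEq n]
    (M : Matrix m n ℝ) (a : m → ℝ) (b : n → ℝ) :
    |a ⬝ᵥ M *ᵥ b| ≤ ‖M‖ * √(a ⬝ᵥ a) * √(b ⬝ᵥ b) := by
  have hinner : a ⬝ᵥ M *ᵥ b
      = ⟪(WithLp.toLp 2 a : EuclideanSpace ℝ m), WithLp.toLp 2 (M *ᵥ b)⟫ := by
    rw [EuclideanSpace.inner_toLp_toLp, star_trivial, dotProduct_comm]
  calc |a ⬝ᵥ M *ᵥ b| ≤ √(a ⬝ᵥ a) * ‖(WithLp.toLp 2 (M *ᵥ b) : EuclideanSpace ℝ m)‖ := by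
        rw [hinner, ← EuclideanSpace.norm_toLp_eq_sqrt_dotProduct]
        exact abs_real_inner_le_norm _ _
    _ ≤ √(a ⬝ᵥ a) * (‖M‖ * √(b ⬝ᵥ b)) := by
        gcongr
        simpa [EuclideanSpace.norm_toLp_eq_sqrt_dotProduct] using
          M.l2_opNorm_mulVec (WithLp.toLp 2 b)
    _ = ‖M‖ * √(a ⬝ᵥ a) * √(b ⬝ᵥ b) := by ring

theorem norm_inv_sub_smul_one_le {ι : Type*} [Fintype ι] [DecidableEq ι] {A : Matrix ι ι ℝ}
    (hA : A.IsSymm) {ε : ℝ} (h : ‖A - 1‖ ≤ ε) (hε : ε < 1) :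
    ‖A⁻¹ - (1 - ε ^ 2)⁻¹ • 1‖ ≤ ε / (1 - ε ^ 2) := by
  have hunit : IsUnit A :=
    sub_sub_self 1 A ▸ (Units.oneSub (1 - A) (by rw [norm_sub_rev]; linarith)).isUnit
  have hsymm : (toEuclideanLin A⁻¹).IsSymmetric :=
    isSymmetric_toEuclideanLin_iff.mpr (isHermitian_iff_isSymm.mpr hA.inv)
  let Φ := toEuclideanCLM (n := ι) (𝕜 := ℝ)
  have := ContinuousLinearMap.norm_sub_smul_one_le_of_mul_eq_one (T := Φ A) (S := Φ A⁻¹) hsymm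
    (by rwa [← map_one Φ, ← map_sub]) hε
    (by rw [← map_mul, mul_nonsing_inv _ ((isUnit_iff_isUnit_det A).mp hunit), map_one])
  rwa [← map_one Φ, ← map_smul, ← map_sub] at this

end Matrix

theorem stmt5_general {n : ℕ} (A : Matrix (Fin n) (Fin n) ℝ) (hA : A.IsSymm)
    (ε : ℝ) (hε0 : 0 ≤ ε) (hε : ε ≤ 1/2)
    (hnorm : ‖A - (1 : Matrix (Fin n) (Fin n) ℝ)‖ ≤ ε)
    (a b : Fin n → ℝ) :
    (a ⬝ᵥ b - ε * Real.sqrt (a ⬝ᵥ a) * Real.sqrt (b ⬝ᵥ b)) / (1 - ε^2)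
        ≤ a ⬝ᵥ (A⁻¹ *ᵥ b) ∧
      a ⬝ᵥ (A⁻¹ *ᵥ b)
        ≤ (a ⬝ᵥ b + ε * Real.sqrt (a ⬝ᵥ a) * Real.sqrt (b ⬝ᵥ b)) / (1 - ε^2) := by
  have hpos : 0 < 1 - ε ^ 2 := by nlinarith
  have hdev := (A⁻¹ - (1 - ε ^ 2)⁻¹ • 1).abs_dotProduct_mulVec_le a b
  rw [sub_mulVec, smul_mulVec, one_mulVec, dotProduct_sub, dotProduct_smul, smul_eq_mul] at hdev
  have hradius : ‖A⁻¹ - (1 - ε ^ 2)⁻¹ • 1‖ * √(a ⬝ᵥ a) * √(b ⬝ᵥ b)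
      ≤ ε / (1 - ε ^ 2) * √(a ⬝ᵥ a) * √(b ⬝ᵥ b) := by
    gcongr
    exact norm_inv_sub_smul_one_le hA hnorm (by linarith)
  obtain ⟨hlo, hhi⟩ := abs_le.mp (hdev.trans hradius)
  have hcenter : a ⬝ᵥ b / (1 - ε ^ 2) = (1 - ε ^ 2)⁻¹ * a ⬝ᵥ b := div_eq_inv_mul _ _
  have hwidth : ε * √(a ⬝ᵥ a) * √(b ⬝ᵥ b) / (1 - ε ^ 2)
      = ε / (1 - ε ^ 2) * √(a ⬝ᵥ a) * √(b ⬝ᵥ b) := by ring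
  rw [sub_div, add_div, hcenter, hwidth]
  constructor <;> linarith

/-- If `‖Ǎ - I‖ ≤ ε ≤ 1/2` (spectral norm), then for all nonzero `a, b`,
`(⟨a,b⟩ - ε‖a‖‖b‖)/(1-ε²) ≤ aᵀ Ǎ⁻¹ b ≤ (⟨a,b⟩ + ε‖a‖‖b‖)/(1-ε²)`. -/
theorem stmt5 {n : ℕ} (A : Matrix (Fin n) (Fin n) ℝ) (hA : A.IsSymm)
    (ε : ℝ) (hε0 : 0 ≤ ε) (hε : ε ≤ 1/2)
    (hnorm : ‖A - (1 : Matrix (Fin n) (Fin n) ℝ)‖ ≤ ε)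
    (a b : Fin n → ℝ) (ha : a ≠ 0) (hb : b ≠ 0) :
    (a ⬝ᵥ b - ε * Real.sqrt (a ⬝ᵥ a) * Real.sqrt (b ⬝ᵥ b)) / (1 - ε^2)
        ≤ a ⬝ᵥ (A⁻¹ *ᵥ b) ∧
      a ⬝ᵥ (A⁻¹ *ᵥ b)
        ≤ (a ⬝ᵥ b + ε * Real.sqrt (a ⬝ᵥ a) * Real.sqrt (b ⬝ᵥ b)) / (1 - ε^2) :=
  stmt5_general A hA ε hε0 hε hnorm a b
end

section
/- Let $X_1,\dots,X_n$ be independent mean-zero real random variables with $\mathbb{E}|X_i|^\nu < \infty$ for some $\nu \in [1,2]$. Then $\mathbb{E}\left|\sum_{i=1}^n X_i\right|^\nu \le 2\sum_{i=1}^n \mathbb{E}|X_i|^\nu$. -/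
/-!
For `1 ≤ p ≤ 2` the derivative `f' t = p * |t| ^ (p - 2) * t` of `f t = |t| ^ p` is
`(p - 1)`-Hölder with constant `2 p`. Hence `y ↦ f x + f' x * y + 2 f y - f (x + y)` vanishes at `0`
and has nonnegative derivative for `y ≥ 0` (the case `y ≤ 0` follows by symmetry), which gives
`f (x + y) ≤ f x + f' x * y + 2 f y`. Apply this to `x = X₁ + ⋯ + Xₖ` and `y = Xₖ₊₁`: by
independence `E[f' x * y] = E[f' x] * E[y] = 0`, so each new summand adds at most `2 E[f Xₖ₊₁]`.
-/

open MeasureTheory ProbabilityTheory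

section Pointwise

variable {p : ℝ}

lemma rpow_sub_rpow_le_rpow_sub {q a b : ℝ} (hq0 : 0 ≤ q) (hq1 : q ≤ 1) (hb : 0 ≤ b)
    (hba : b ≤ a) : a ^ q - b ^ q ≤ (a - b) ^ q := by
  have := Real.rpow_add_le_add_rpow (sub_nonneg.2 hba) hb hq0 hq1
  rw [sub_add_cancel] at this
  linarith

lemma abs_rpow_sub_two_mul_self_of_nonneg (hp : 1 < p) {t : ℝ} (ht : 0 ≤ t) :
    |t| ^ (p - 2) * t = t ^ (p - 1) := by
  rcases ht.eq_or_lt with rfl | ht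
  · simp [Real.zero_rpow (by linarith : p - 1 ≠ 0)]
  · rw [abs_of_pos ht, ← Real.rpow_add_one ht.ne']
    ring_nf

lemma abs_abs_rpow_sub_two_mul_self_le (t : ℝ) : |(|t| ^ (p - 2) * t)| ≤ |t| ^ (p - 1) := by
  rcases eq_or_ne t 0 with rfl | ht
  · simpa using Real.rpow_nonneg le_rfl (p - 1)
  · rw [abs_mul, abs_of_nonneg (Real.rpow_nonneg (abs_nonneg t) _),
      ← Real.rpow_add_one (abs_ne_zero.2 ht)]
    exact le_of_eq (by ring_nf)

lemma abs_rpow_sub_two_mul_self_sub_le (hp1 : 1 < p) (hp2 : p ≤ 2) {a b : ℝ} (hba : b ≤ a) :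
    |a| ^ (p - 2) * a - |b| ^ (p - 2) * b ≤ 2 * (a - b) ^ (p - 1) := by
  have hq0 : 0 ≤ p - 1 := by linarith
  have same_sign : ∀ {a b : ℝ}, 0 ≤ b → b ≤ a →
      |a| ^ (p - 2) * a - |b| ^ (p - 2) * b ≤ 2 * (a - b) ^ (p - 1) := by
    intro a b hb hba
    rw [abs_rpow_sub_two_mul_self_of_nonneg hp1 (hb.trans hba),
      abs_rpow_sub_two_mul_self_of_nonneg hp1 hb]
    have := rpow_sub_rpow_le_rpow_sub hq0 (by linarith) hb hba
    have := Real.rpow_nonneg (sub_nonneg.2 hba) (p - 1)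
    linarith
  rcases le_total 0 b with hb | hb
  · exact same_sign hb hba
  rcases le_total a 0 with ha | ha
  · have := same_sign (neg_nonneg.2 ha) (neg_le_neg hba)
    rw [abs_neg, abs_neg, neg_sub_neg] at this
    linarith
  · have hb' : |b| ^ (p - 2) * b = -(-b) ^ (p - 1) := by
      rw [← abs_rpow_sub_two_mul_self_of_nonneg hp1 (neg_nonneg.2 hb), abs_neg, mul_neg, neg_neg]
    rw [abs_rpow_sub_two_mul_self_of_nonneg hp1 ha, hb']
    have := Real.rpow_le_rpow ha (by linarith : a ≤ a - b) hq0
    have := Real.rpow_le_rpow (neg_nonneg.2 hb) (by linarith : -b ≤ a - b) hq0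
    linarith

lemma abs_add_rpow_le_of_nonneg (hp1 : 1 < p) (hp2 : p ≤ 2) (x : ℝ) {y : ℝ} (hy : 0 ≤ y) :
    |x + y| ^ p ≤ |x| ^ p + p * (|x| ^ (p - 2) * x) * y + 2 * |y| ^ p := by
  set F : ℝ → ℝ := fun t ↦ |x| ^ p + p * (|x| ^ (p - 2) * x) * t + 2 * |t| ^ p - |x + t| ^ p
  have hF : ∀ t, HasDerivAt F (p * (|x| ^ (p - 2) * x) + 2 * (p * |t| ^ (p - 2) * t)
      - p * |x + t| ^ (p - 2) * (x + t)) t := by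
    intro t
    have h1 := hasDerivAt_abs_rpow t hp1
    have h2 := (hasDerivAt_abs_rpow (x + t) hp1).comp t ((hasDerivAt_id t).const_add x)
    refine ((((hasDerivAt_id t).const_mul _).const_add _ |>.add (h1.const_mul 2)).sub h2 :
      HasDerivAt F _ t).congr_deriv ?_
    simp
  have hmono : MonotoneOn F (Set.Ici 0) := by
    refine monotoneOn_of_hasDerivWithinAt_nonneg (convex_Ici 0)
      (fun t _ ↦ (hF t).continuousAt.continuousWithinAt) (fun t _ ↦ (hF t).hasDerivWithinAt) ?_
    intro t ht
    have ht : 0 ≤ t := by simpa using interior_subset ht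
    have := abs_rpow_sub_two_mul_self_sub_le hp1 hp2 (le_add_of_nonneg_right ht : x ≤ x + t)
    rw [add_sub_cancel_left, ← abs_rpow_sub_two_mul_self_of_nonneg hp1 ht] at this
    nlinarith
  have := hmono (Set.mem_Ici.2 le_rfl) hy hy
  simp [F, Real.zero_rpow (by linarith : p ≠ 0)] at this
  linarith

theorem abs_add_rpow_le (hp1 : 1 ≤ p) (hp2 : p ≤ 2) (x y : ℝ) :
    |x + y| ^ p ≤ |x| ^ p + p * (|x| ^ (p - 2) * x) * y + 2 * |y| ^ p := by
  rcases hp1.eq_or_lt with rfl | hp1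
  · have hc : |(|x| ^ (1 - 2 : ℝ) * x) * y| ≤ |y| := by
      rw [abs_mul]
      refine mul_le_of_le_one_left (abs_nonneg y) ?_
      simpa using abs_abs_rpow_sub_two_mul_self_le (p := 1) x
    simp only [Real.rpow_one, one_mul]
    linarith [abs_add_le x y, (abs_le.1 hc).1]
  rcases le_total 0 y with hy | hy
  · exact abs_add_rpow_le_of_nonneg hp1 hp2 x hy
  · have := abs_add_rpow_le_of_nonneg hp1 hp2 (-x) (neg_nonneg.2 hy)
    rw [← neg_add, abs_neg, abs_neg, abs_neg] at this
    linarith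

end Pointwise

section Probability

variable {Ω : Type*} {mΩ : MeasurableSpace Ω} {μ : Measure Ω} {p : ℝ}

lemma MeasureTheory.MemLp.integrable_abs_rpow [IsFiniteMeasure μ] (hp : 0 ≤ p) {f : Ω → ℝ}
    (hf : MemLp f (ENNReal.ofReal p) μ) : Integrable (fun ω ↦ |f ω| ^ p) μ := by
  simpa [ENNReal.toReal_ofReal hp] using hf.integrable_norm_rpow'

lemma MeasureTheory.MemLp.lintegral_ofReal_abs_rpow [IsFiniteMeasure μ] (hp : 0 ≤ p)
    {f : Ω → ℝ} (hf : MemLp f (ENNReal.ofReal p) μ) :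
    ∫⁻ ω, ENNReal.ofReal (|f ω| ^ p) ∂μ = ENNReal.ofReal (∫ ω, |f ω| ^ p ∂μ) :=
  (ofReal_integral_eq_lintegral_ofReal (hf.integrable_abs_rpow hp)
    (ae_of_all _ fun _ ↦ by positivity)).symm

lemma memLp_ofReal_of_lintegral_abs_rpow_lt_top (hp : 0 < p) {f : Ω → ℝ}
    (hf : AEStronglyMeasurable f μ) (hfp : ∫⁻ ω, ENNReal.ofReal (|f ω| ^ p) ∂μ < ⊤) :
    MemLp f (ENNReal.ofReal p) μ := by
  rw [← integrable_norm_rpow_iff hf (by simpa using hp) ENNReal.ofReal_ne_top,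
    ENNReal.toReal_ofReal hp.le]
  refine ⟨by fun_prop (disch := exact hp.le), ?_⟩
  rw [hasFiniteIntegral_iff_ofReal (ae_of_all _ fun _ ↦ by positivity)]
  simpa using hfp

theorem integral_abs_add_rpow_le [IsFiniteMeasure μ] (hp1 : 1 ≤ p) (hp2 : p ≤ 2)
    {S Y : Ω → ℝ} (hS : MemLp S (ENNReal.ofReal p) μ) (hY : MemLp Y (ENNReal.ofReal p) μ)
    (hSY : IndepFun S Y μ) (hY0 : μ[Y] = 0) :
    ∫ ω, |S ω + Y ω| ^ p ∂μ ≤ ∫ ω, |S ω| ^ p ∂μ + 2 * ∫ ω, |Y ω| ^ p ∂μ := by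
  set H : Ω → ℝ := fun ω ↦ |S ω| ^ (p - 2) * S ω with hH_def
  have hφ : Measurable fun t : ℝ ↦ |t| ^ (p - 2) * t := by fun_prop
  have hH : Integrable H μ := by
    have hSq := integrable_norm_rpow_of_le (p := p - 1) hS.1 (by linarith) (by linarith)
      (by linarith) (hS.integrable_abs_rpow (by linarith))
    refine hSq.mono' (hφ.comp_aemeasurable hS.1.aemeasurable).aestronglyMeasurable
      (ae_of_all _ fun ω ↦ ?_)
    rw [Real.norm_eq_abs, Real.norm_eq_abs]
    exact abs_abs_rpow_sub_two_mul_self_le (S ω)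
  have hHY : IndepFun H Y μ := hSY.comp hφ measurable_id
  have hHY_int : Integrable (fun ω ↦ H ω * Y ω) μ :=
    hHY.integrable_mul hH (hY.integrable (ENNReal.one_le_ofReal.2 hp1))
  have hHY0 : ∫ ω, H ω * Y ω ∂μ = 0 := by
    rw [hHY.integral_fun_mul_eq_mul_integral hH.1 hY.1, hY0, mul_zero]
  have hSp := hS.integrable_abs_rpow (by linarith)
  have hYp := hY.integrable_abs_rpow (by linarith)
  calc ∫ ω, |S ω + Y ω| ^ p ∂μ
      ≤ ∫ ω, |S ω| ^ p + p * (H ω * Y ω) + 2 * |Y ω| ^ p ∂μ := by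
        refine integral_mono ((hS.add hY).integrable_abs_rpow (by linarith))
          ((hSp.fun_add (hHY_int.const_mul p)).fun_add (hYp.const_mul 2)) fun ω ↦ ?_
        simpa [hH_def, mul_assoc] using abs_add_rpow_le hp1 hp2 (S ω) (Y ω)
    _ = ∫ ω, |S ω| ^ p ∂μ + 2 * ∫ ω, |Y ω| ^ p ∂μ := by
        rw [integral_add (hSp.fun_add (hHY_int.const_mul p)) (hYp.const_mul 2),
          integral_add hSp (hHY_int.const_mul p), integral_const_mul, integral_const_mul, hHY0,
          mul_zero, add_zero]

theorem integral_abs_sum_rpow_le [IsFiniteMeasure μ] (hp1 : 1 ≤ p) (hp2 : p ≤ 2)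
    {ι : Type*} {X : ι → Ω → ℝ} (hX : ∀ i, MemLp (X i) (ENNReal.ofReal p) μ)
    (hind : iIndepFun X μ) (hmean : ∀ i, μ[X i] = 0) (s : Finset ι) :
    ∫ ω, |∑ i ∈ s, X i ω| ^ p ∂μ ≤ 2 * ∑ i ∈ s, ∫ ω, |X i ω| ^ p ∂μ := by
  classical
  induction s using Finset.induction_on with
  | empty => simp [Real.zero_rpow (by linarith : p ≠ 0)]
  | insert j s hj ih =>
    have hindep : IndepFun (∑ i ∈ s, X i) (X j) μ :=
      hind.indepFun_finsetSum_of_notMem₀ (fun i ↦ (hX i).aemeasurable) hj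
    have := integral_abs_add_rpow_le hp1 hp2 (memLp_finsetSum' s fun i _ ↦ hX i) (hX j) hindep
      (hmean j)
    simp only [Finset.sum_apply] at this
    simp only [Finset.sum_insert hj, add_comm (X j _)]
    linarith


end Probability

theorem stmt7_general {Ω : Type*} [MeasurableSpace Ω] (P : Measure Ω) [IsProbabilityMeasure P]
    {n : ℕ} (X : Fin n → Ω → ℝ)
    (hmeas : ∀ i, Measurable (X i))
    (hind : iIndepFun X P)
    (hmean : ∀ i, ∫ ω, X i ω ∂P = 0)
    (ν : ℝ) (hν1 : 1 ≤ ν) (hν2 : ν ≤ 2)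
    (hmom : ∀ i, ∫⁻ ω, ENNReal.ofReal (|X i ω| ^ ν) ∂P < ⊤) :
    ∫⁻ ω, ENNReal.ofReal (|∑ i, X i ω| ^ ν) ∂P
      ≤ 2 * ∑ i, ∫⁻ ω, ENNReal.ofReal (|X i ω| ^ ν) ∂P := by
  have hν0 : 0 ≤ ν := by linarith
  have hX : ∀ i, MemLp (X i) (ENNReal.ofReal ν) P := fun i ↦
    memLp_ofReal_of_lintegral_abs_rpow_lt_top (by linarith) (hmeas i).aestronglyMeasurable
      (hmom i)
  rw [(memLp_finsetSum Finset.univ fun i _ ↦ hX i).lintegral_ofReal_abs_rpow hν0]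
  simp_rw [(hX _).lintegral_ofReal_abs_rpow hν0]
  rw [← ENNReal.ofReal_sum_of_nonneg fun i _ ↦ integral_nonneg fun ω ↦ by positivity,
    ← ENNReal.ofReal_ofNat 2, ← ENNReal.ofReal_mul zero_le_two]
  exact ENNReal.ofReal_le_ofReal (integral_abs_sum_rpow_le hν1 hν2 hX hind hmean Finset.univ)

/-- Bahr–Esseen inequality: for independent centered real random variables with
finite `ν`-th moment, `ν ∈ [1,2]`, one has `E|∑ Xᵢ|^ν ≤ 2 ∑ E|Xᵢ|^ν`. -/
theorem stmt7 {Ω : Type*} [MeasurableSpace Ω] (P : Measure Ω) [IsProbabilityMeasure P]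
    {n : ℕ} (X : Fin n → Ω → ℝ)
    (hmeas : ∀ i, Measurable (X i))
    (hind : iIndepFun X P)
    (hint : ∀ i, Integrable (X i) P)
    (hmean : ∀ i, ∫ ω, X i ω ∂P = 0)
    (ν : ℝ) (hν1 : 1 ≤ ν) (hν2 : ν ≤ 2)
    (hmom : ∀ i, ∫⁻ ω, ENNReal.ofReal (|X i ω| ^ ν) ∂P < ⊤) :
    ∫⁻ ω, ENNReal.ofReal (|∑ i, X i ω| ^ ν) ∂P
      ≤ 2 * ∑ i, ∫⁻ ω, ENNReal.ofReal (|X i ω| ^ ν) ∂P :=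
  stmt7_general P X hmeas hind hmean ν hν1 hν2 hmom
end

section
/- Under the geometric assumptions of the noiseless orthogonal model — $\boldsymbol{z}_i$ pairwise orthogonal, each orthogonal to $\boldsymbol{\mu}$, all nonzero — the vector $\bar{\boldsymbol{w}} = \frac{\boldsymbol{\mu} + \boldsymbol{z}_\perp}{\|\boldsymbol{\mu}\|^2 + \|\boldsymbol{z}_\perp\|^2}$, where $\boldsymbol{z}_\perp = \frac{\bar Z^\top(\bar Z\bar Z^\top)^{-1}\mathbf{1}}{\mathbf{1}^\top(\bar Z\bar Z^\top)^{-1}\mathbf{1}}$, satisfies $\langle \bar{\boldsymbol{w}}, \bar{\boldsymbol{x}}_i\rangle = 1$ for all $i = 1,\dots,n$. -/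
/-!
Write `G = Z̄Z̄ᵀ` and `s = 𝟙ᵀG⁻¹𝟙`. Since `Z̄ z⊥ = s⁻¹ G G⁻¹ 𝟙 = s⁻¹ 𝟙`, the vector `z⊥` has inner
product `s⁻¹` with every row `z̄ᵢ`, hence `‖z⊥‖² = s⁻¹ 𝟙ᵀG⁻¹𝟙 · s⁻¹ = s⁻¹` as well, and `z⊥ ⊥ μ`
because `Z̄μ = 0`. So `⟨μ + z⊥, μ + z̄ᵢ⟩ = ‖μ‖² + s⁻¹ = ‖μ‖² + ‖z⊥‖²`. The normalizer is nonzero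
because `s > 0`: `G` is positive definite, being diagonal with positive entries when the rows
are pairwise orthogonal and nonzero.
-/

open Matrix

namespace Matrix

variable {m k : Type*} [Fintype k] [DecidableEq m]

theorem posDef_mul_transpose_of_pairwise_orthogonal {A : Matrix m k ℝ}
    (horth : Pairwise fun i j => A i ⬝ᵥ A j = 0) (hA : ∀ i, A i ≠ 0) :
    (A * Aᵀ).PosDef := by
  have hdiag : A * Aᵀ = diagonal fun i => A i ⬝ᵥ A i := by
    ext i j
    rw [mul_apply']
    obtain rfl | hij := eq_or_ne i j
    · exact (diagonal_apply_eq (fun i => A i ⬝ᵥ A i) i).symm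
    · rw [diagonal_apply_ne _ hij]
      exact horth hij
  rw [hdiag, posDef_diagonal_iff]
  intro i
  simpa using dotProduct_star_self_pos_iff.mpr (hA i)

variable [Fintype m]

noncomputable def invGramMass (A : Matrix m k ℝ) : ℝ :=
  1 ⬝ᵥ ((A * Aᵀ)⁻¹ *ᵥ 1)

noncomputable def zPerp (A : Matrix m k ℝ) : k → ℝ :=
  (invGramMass A)⁻¹ • (Aᵀ *ᵥ ((A * Aᵀ)⁻¹ *ᵥ 1))

theorem invGramMass_pos [Nonempty m] {A : Matrix m k ℝ} (hA : (A * Aᵀ).PosDef) :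
    0 < invGramMass A := by
  simpa [invGramMass] using hA.inv.dotProduct_mulVec_pos (x := (1 : m → ℝ)) one_ne_zero

theorem mulVec_zPerp {A : Matrix m k ℝ} (hA : IsUnit (A * Aᵀ).det) :
    A *ᵥ zPerp A = (invGramMass A)⁻¹ • 1 := by
  rw [zPerp, mulVec_smul, mulVec_mulVec, mulVec_mulVec, mul_nonsing_inv _ hA, one_mulVec]

theorem zPerp_dotProduct_self {A : Matrix m k ℝ} (hA : IsUnit (A * Aᵀ).det) :
    zPerp A ⬝ᵥ zPerp A = (invGramMass A)⁻¹ := by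
  set s := invGramMass A
  calc zPerp A ⬝ᵥ zPerp A = s⁻¹ * (A *ᵥ zPerp A ⬝ᵥ ((A * Aᵀ)⁻¹ *ᵥ 1)) := by
        nth_rewrite 2 [zPerp]
        rw [dotProduct_smul, dotProduct_mulVec, vecMul_transpose, smul_eq_mul]
    _ = s⁻¹ * (s⁻¹ * s) := by rw [mulVec_zPerp hA, smul_dotProduct, smul_eq_mul]; rfl
    _ = s⁻¹ := by
        obtain hs | hs := eq_or_ne s 0
        · simp [hs]
        · rw [inv_mul_cancel₀ hs, mul_one]

theorem zPerp_dotProduct_of_mulVec_eq_zero {A : Matrix m k ℝ} {v : k → ℝ} (hv : A *ᵥ v = 0) :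
    zPerp A ⬝ᵥ v = 0 := by
  rw [zPerp, smul_dotProduct, dotProduct_comm, dotProduct_mulVec, vecMul_transpose, hv,
    zero_dotProduct, smul_zero]

noncomputable def wBar (A : Matrix m k ℝ) (μ : k → ℝ) : k → ℝ :=
  (μ ⬝ᵥ μ + zPerp A ⬝ᵥ zPerp A)⁻¹ • (μ + zPerp A)

theorem wBar_dotProduct_add_row {A : Matrix m k ℝ} (hA : (A * Aᵀ).PosDef) {μ : k → ℝ}
    (hμ : A *ᵥ μ = 0) (i : m) : wBar A μ ⬝ᵥ (μ + A i) = 1 := by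
  have : Nonempty m := ⟨i⟩
  have hdet : IsUnit (A * Aᵀ).det := (isUnit_iff_isUnit_det _).mp hA.isUnit
  have hrow : zPerp A ⬝ᵥ A i = (invGramMass A)⁻¹ := by
    rw [dotProduct_comm]
    exact (congrFun (mulVec_zPerp hdet) i).trans (by simp)
  have hμrow : μ ⬝ᵥ A i = 0 := by
    rw [dotProduct_comm]
    exact congrFun hμ i
  have hμμ : 0 ≤ μ ⬝ᵥ μ := by simpa using dotProduct_star_self_nonneg μ
  have hs := invGramMass_pos hA
  rw [wBar, smul_dotProduct, add_dotProduct, dotProduct_add, dotProduct_add, hμrow, hrow,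
    zPerp_dotProduct_of_mulVec_eq_zero hμ, zPerp_dotProduct_self hdet, smul_eq_mul]
  field_simp
  ring

end Matrix

/-- In the fully orthogonal noiseless model, the vector
`w̄ = (μ + z⊥)/(‖μ‖² + ‖z⊥‖²)` with
`z⊥ = Z̄ᵀ(Z̄Z̄ᵀ)⁻¹𝟙 / (𝟙ᵀ(Z̄Z̄ᵀ)⁻¹𝟙)` satisfies `⟨w̄, x̄ᵢ⟩ = 1` for all `i`. -/
theorem stmt17 {n p : ℕ} (z : Fin n → Fin p → ℝ) (μ : Fin p → ℝ) (y : Fin n → ℝ)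
    (hy : ∀ i, y i = 1 ∨ y i = -1)
    (horth : ∀ i j, i ≠ j → z i ⬝ᵥ z j = 0)
    (hμorth : ∀ i, z i ⬝ᵥ μ = 0)
    (hz : ∀ i, z i ≠ 0)
    (Zbar : Matrix (Fin n) (Fin p) ℝ) (hZbar : Zbar = Matrix.of (fun i => y i • z i))
    (one : Fin n → ℝ) (hone : one = fun _ => 1)
    (zperp : Fin p → ℝ)
    (hzperp : zperp
      = (one ⬝ᵥ ((Zbar * Zbarᵀ)⁻¹ *ᵥ one))⁻¹ • (Zbarᵀ *ᵥ ((Zbar * Zbarᵀ)⁻¹ *ᵥ one)))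
    (wbar : Fin p → ℝ)
    (hwbar : wbar = (μ ⬝ᵥ μ + zperp ⬝ᵥ zperp)⁻¹ • (μ + zperp)) :
    ∀ i, wbar ⬝ᵥ (μ + y i • z i) = 1 := by
  subst hone hzperp hwbar
  have hrow : ∀ i, Zbar i = y i • z i := fun i => by rw [hZbar]; rfl
  have hy0 : ∀ i, y i ≠ 0 := fun i => by rcases hy i with h | h <;> simp [h]
  have hgram : (Zbar * Zbarᵀ).PosDef := by
    refine posDef_mul_transpose_of_pairwise_orthogonal (fun i j hij => ?_) fun i => ?_
    · change Zbar i ⬝ᵥ Zbar j = 0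
      rw [hrow, hrow, smul_dotProduct, dotProduct_smul, horth i j hij, smul_zero, smul_zero]
    · rw [hrow]
      exact smul_ne_zero (hy0 i) (hz i)
  have hμ : Zbar *ᵥ μ = 0 := funext fun i => by
    change Zbar i ⬝ᵥ μ = 0
    rw [hrow, smul_dotProduct, hμorth, smul_zero]
  intro i
  rw [← hrow i]
  exact wBar_dotProduct_add_row hgram hμ i
end

section
/- Suppose $A = ZZ^\top$ is invertible, and with the scalars $s = \boldsymbol{y}^\top A^{-1}\boldsymbol{y}$, $t = \boldsymbol{\nu}^\top A^{-1}\boldsymbol{\nu}$, $h = \boldsymbol{y}^\top A^{-1}\boldsymbol{\nu}$ for $\boldsymbol{\nu} = Z\boldsymbol{\mu}$, set $d = s(\|\boldsymbol{\mu}\|^2 - t) + (1+h)^2$. If $d \ne 0$ then $XX^\top$ is invertible with $(XX^\top)^{-1} = A^{-1} - d^{-1}A^{-1}\left[(1+h)(\boldsymbol{y}\boldsymbol{\nu}^\top + \boldsymbol{\nu}\boldsymbol{y}^\top) - s\,\boldsymbol{\nu}\boldsymbol{\nu}^\top + (\|\boldsymbol{\mu}\|^2 - t)\,\boldsymbol{y}\boldsymbol{y}^\top\right]A^{-1}$,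 where $X = Z + \boldsymbol{y}\boldsymbol{\mu}^\top$. -/
/-!
Expanding the product gives `XXᵀ = A + P` with `P = yνᵀ + νyᵀ + ‖μ‖² yyᵀ`. Since `E = A⁻¹` is
symmetric, every product of rank-one terms in `P E C` collapses to one of the scalars `s`, `t`, `h`,
and this yields `d P = C + P E C` for the bracketed matrix `C`. That identity is exactly what makes
`E - d⁻¹ E C E` a right inverse of `A + P`.
-/

open Matrix

variable {ι κ K : Type*}

section CommRing

variable [CommRing K]

/-- `XXᵀ - ZZᵀ` for `X = Z + y μᵀ`, written with `ν = Zμ` and `m = ‖μ‖²`. -/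
def gramUpdate (y ν : ι → K) (m : K) : Matrix ι ι K :=
  vecMulVec y ν + vecMulVec ν y + m • vecMulVec y y

theorem add_vecMulVec_mul_transpose_self [Fintype κ] (Z : Matrix ι κ K) (y : ι → K) (μ : κ → K) :
    (Z + vecMulVec y μ) * (Z + vecMulVec y μ)ᵀ = Z * Zᵀ + gramUpdate y (Z *ᵥ μ) (μ ⬝ᵥ μ) := by
  rw [gramUpdate, transpose_add, transpose_vecMulVec, Matrix.add_mul, Matrix.mul_add,
    Matrix.mul_add, mul_vecMulVec, vecMulVec_mul, vecMul_transpose, vecMulVec_mul_vecMulVec,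
    vecMulVec_smul]
  abel

theorem vecMulVec_mul_mul_vecMulVec [Fintype ι] (a b c e : ι → K) (M : Matrix ι ι K) :
    vecMulVec a b * M * vecMulVec c e = (b ⬝ᵥ M *ᵥ c) • vecMulVec a e := by
  rw [vecMulVec_mul, vecMulVec_mul_vecMulVec, vecMulVec_smul, dotProduct_mulVec]

theorem smul_gramUpdate_eq [Fintype ι] {E : Matrix ι ι K} (hE : E.IsSymm) (y ν : ι → K)
    (m s t h : K) (hs : s = y ⬝ᵥ E *ᵥ y) (ht : t = ν ⬝ᵥ E *ᵥ ν)
    (hh : h = y ⬝ᵥ E *ᵥ ν) :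
    let C := (1 + h) • (vecMulVec y ν + vecMulVec ν y) - s • vecMulVec ν ν
      + (m - t) • vecMulVec y y
    (s * (m - t) + (1 + h) ^ 2) • gramUpdate y ν m = C + gramUpdate y ν m * E * C := by
  have hh' : ν ⬝ᵥ E *ᵥ y = h := by
    rw [hh, ← dotProduct_transpose_mulVec, hE.eq]
  simp only [gramUpdate, add_mul, mul_add, mul_sub, smul_mul_assoc, mul_smul_comm,
    vecMulVec_mul_mul_vecMulVec, ← hs, ← ht, ← hh, hh']
  module

end CommRing

theorem mul_sub_smul_eq_one {K R : Type*} [Field K] [Ring R] [Algebra K R]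
    {A E P C : R} {d : K} (hAE : A * E = 1) (hd : d ≠ 0) (hP : d • P = C + P * E * C) :
    (A + P) * (E - d⁻¹ • (E * C * E)) = 1 := by
  have hCE : C * E + P * E * C * E = d • (P * E) := by
    rw [← add_mul, ← hP, smul_mul_assoc]
  calc (A + P) * (E - d⁻¹ • (E * C * E))
      = A * E + P * E - d⁻¹ • (C * E + P * E * C * E) := by
        simp only [add_mul, mul_sub, mul_smul_comm, smul_add, ← mul_assoc, hAE, one_mul]
    _ = 1 := by rw [hCE, smul_smul, inv_mul_cancel₀ hd, one_smul, hAE, add_sub_cancel_right]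

/-- Explicit inverse of the Gram matrix `XXᵀ` for `X = Z + y μᵀ`, via the
Woodbury identity. -/
theorem stmt19 {n p : ℕ} (Z : Matrix (Fin n) (Fin p) ℝ)
    (y : Fin n → ℝ) (μ : Fin p → ℝ)
    (A : Matrix (Fin n) (Fin n) ℝ) (hAdef : A = Z * Zᵀ)
    (hAunit : IsUnit A.det)
    (ν : Fin n → ℝ) (hν : ν = Z *ᵥ μ)
    (s t h d : ℝ)
    (hs : s = y ⬝ᵥ (A⁻¹ *ᵥ y))
    (ht : t = ν ⬝ᵥ (A⁻¹ *ᵥ ν))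
    (hh : h = y ⬝ᵥ (A⁻¹ *ᵥ ν))
    (hd : d = s * (μ ⬝ᵥ μ - t) + (1 + h)^2)
    (hd0 : d ≠ 0)
    (X : Matrix (Fin n) (Fin p) ℝ) (hX : X = Z + vecMulVec y μ) :
    IsUnit (X * Xᵀ).det ∧
      (X * Xᵀ)⁻¹
        = A⁻¹ - d⁻¹ •
            (A⁻¹ * ((1 + h) • (vecMulVec y ν + vecMulVec ν y)
              - s • vecMulVec ν ν + (μ ⬝ᵥ μ - t) • vecMulVec y y) * A⁻¹) := by
  have hA_symm : A⁻¹.IsSymm :=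
    IsSymm.inv <| by rw [IsSymm, hAdef, transpose_mul, transpose_transpose]
  have hXX : X * Xᵀ = A + gramUpdate y ν (μ ⬝ᵥ μ) := by
    rw [hX, hAdef, hν, add_vecMulVec_mul_transpose_self]
  have hkey := hd ▸ smul_gramUpdate_eq hA_symm y ν (μ ⬝ᵥ μ) s t h hs ht hh
  have hinv := hXX ▸ mul_sub_smul_eq_one (mul_nonsing_inv A hAunit) hd0 hkey
  exact ⟨isUnit_det_of_right_inverse hinv, inv_eq_right_inv hinv⟩
end
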